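/- Let A ∈ F_q[X] be an additive polynomial that is not of the form aX^{p^h} with a ∈ F_q and h ≥ 0, and let c_A := liminf_{n→∞} s_A(n)/n. Then for every integer k ≥ 1, the k-th iterate A^{(k)} satisfies c_{A^{(k)}} = k·c_A, where c_{A^{(k)}} := liminf_{n→∞} s_{A^{(k)}}(n)/n. -/
import Mathlib


open Polynomial Filter IntermediateField

/-- A polynomial over a field of characteristic `p` is additive iff every
monomial with nonzero coefficient has exponent a power of `p`
(equivalently, `A(X) = ∑ aᵢ X^(pⁱ)`). -/
def IsAdditivePoly {F : Type*} [Field F] (p : ℕ) (A : Polynomial F) : Prop :=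
  ∀ i : ℕ, A.coeff i ≠ 0 → ∃ h : ℕ, i = p ^ h

/-- `polyIter P n` is the `n`-fold composition `P^{(n)}` of `P` with itself,
with the convention `P^{(0)} = X`. -/
noncomputable def polyIter {F : Type*} [Field F] (P : Polynomial F) (n : ℕ) : Polynomial F :=
  (fun Q => P.comp Q)^[n] Polynomial.X

/-- `SplitsIn P j` : `P` splits completely over `F_{q^j}`, i.e. every root of
`P` in an algebraic closure of `F` lies in the subfield with `q^j` elements,
where `q = #F`. -/
def SplitsIn {F : Type*} [Field F] [Fintype F] (P : Polynomial F) (j : ℕ) : Prop :=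
  ∀ y : AlgebraicClosure F, Polynomial.aeval y P = 0 → y ^ Fintype.card F ^ j = y

/-- `sDeg P n` : the degree over `F_q` of the splitting field of the `n`-th
iterate `P^{(n)}`, i.e. the least positive `j` such that `P^{(n)}` splits
completely in `F_{q^j}`. -/
noncomputable def sDeg {F : Type*} [Field F] [Fintype F] (P : Polynomial F) (n : ℕ) : ℕ :=
  sInf {j : ℕ | 0 < j ∧ SplitsIn (polyIter P n) j}

/-! ### Basic properties of `polyIter` -/

lemma polyIter_zero {F : Type*} [Field F] (P : Polynomial F) : polyIter P 0 = X := rfl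

lemma polyIter_succ {F : Type*} [Field F] (P : Polynomial F) (n : ℕ) :
    polyIter P (n + 1) = P.comp (polyIter P n) := Function.iterate_succ_apply' _ n _

lemma polyIter_add {F : Type*} [Field F] (P : Polynomial F) (a b : ℕ) :
    polyIter P (a + b) = (polyIter P a).comp (polyIter P b) := by
  induction a with
  | zero => simp [polyIter_zero]
  | succ a ih =>
    have h : a + 1 + b = (a + b) + 1 := by omega
    rw [h, polyIter_succ, ih, polyIter_succ, comp_assoc]

lemma polyIter_polyIter {F : Type*} [Field F] (P : Polynomial F) (k n : ℕ) :
    polyIter (polyIter P k) n = polyIter P (k * n) := by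
  induction n with
  | zero => simp [polyIter_zero]
  | succ n ih =>
    rw [polyIter_succ, ih, ← polyIter_add]
    congr 1
    ring

/-! ### Roots of polynomials over finite fields lie in finite subfields -/

lemma pow_pow_fixed {K : Type*} [Monoid K] (y : K) (c : ℕ) (h : y ^ c = y) :
    ∀ m, y ^ c ^ m = y := by
  intro m
  induction m with
  | zero => simp
  | succ m ih => rw [pow_succ, pow_mul, ih, h]

lemma exists_pow_card_eq {F : Type*} [Field F] [Fintype F] (y : AlgebraicClosure F) :
    ∃ j : ℕ, 0 < j ∧ y ^ Fintype.card F ^ j = y := by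
  have hint : IsIntegral F y := Algebra.IsIntegral.isIntegral y
  haveI : FiniteDimensional F F⟮y⟯ := IntermediateField.adjoin.finiteDimensional hint
  haveI : Finite F⟮y⟯ := Module.finite_of_finite F
  haveI : Fintype F⟮y⟯ := Fintype.ofFinite _
  refine ⟨Module.finrank F F⟮y⟯, Module.finrank_pos, ?_⟩
  have hcard : Fintype.card F⟮y⟯ = Fintype.card F ^ Module.finrank F F⟮y⟯ :=
    Module.card_eq_pow_finrank
  have hy : (⟨y, IntermediateField.mem_adjoin_simple_self F y⟩ : F⟮y⟯) ^ Fintype.card F⟮y⟯ =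
      ⟨y, IntermediateField.mem_adjoin_simple_self F y⟩ := FiniteField.pow_card _
  have h2 := congrArg (Subtype.val) hy
  rw [hcard] at h2
  simpa using h2

lemma splitsIn_exists {F : Type*} [Field F] [Fintype F] {P : Polynomial F} (hP : P ≠ 0) :
    ∃ j : ℕ, 0 < j ∧ SplitsIn P j := by
  have hfin : (P.rootSet (AlgebraicClosure F)).Finite := P.rootSet_finite _
  choose jf hjf1 hjf2 using fun y : AlgebraicClosure F => exists_pow_card_eq y
  refine ⟨∏ y ∈ hfin.toFinset, jf y, Finset.prod_pos fun y _ => hjf1 y, ?_⟩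
  intro y hy
  have hmem : y ∈ hfin.toFinset := by
    rw [Set.Finite.mem_toFinset]
    exact (Polynomial.mem_rootSet).2 ⟨hP, hy⟩
  obtain ⟨m, hm⟩ := Finset.dvd_prod_of_mem jf hmem
  rw [hm, pow_mul]
  exact pow_pow_fixed y _ (hjf2 y) m

/-! ### The key real-analytic lemma about liminfs -/

lemma liminf_aux (g : ℕ → ℕ) (hmono : Monotone g) (k : ℕ) (hk : 1 ≤ k) :
    Filter.liminf (fun n : ℕ => (g (k*n) : ℝ) / n) Filter.atTop
      = (k : ℝ) * Filter.liminf (fun n : ℕ => (g n : ℝ) / n) Filter.atTop := by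
  set u : ℕ → ℝ := fun n => (g n : ℝ) / n with hu
  set v : ℕ → ℝ := fun n => (g (k*n) : ℝ) / n with hv
  have hkpos : (0:ℝ) < k := by exact_mod_cast hk
  have hu0 : ∀ n, 0 ≤ u n := fun n => div_nonneg (Nat.cast_nonneg _) (Nat.cast_nonneg _)
  have hv0 : ∀ n, 0 ≤ v n := fun n => div_nonneg (Nat.cast_nonneg _) (Nat.cast_nonneg _)
  set S : Set ℝ := {a : ℝ | ∀ᶠ n in atTop, a ≤ u n} with hS
  set T : Set ℝ := {a : ℝ | ∀ᶠ n in atTop, a ≤ v n} with hT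
  have hST : S ⊆ T := by
    intro a ha
    filter_upwards [ha, eventually_ge_atTop 1] with n h1 h2
    refine h1.trans ?_
    have hle : (g n : ℝ) ≤ g (k*n) := by
      exact_mod_cast hmono (Nat.le_mul_of_pos_left n hk)
    have hn0 : (0:ℝ) < n := by exact_mod_cast h2
    exact div_le_div_of_nonneg_right hle hn0.le
  have hliminfu : Filter.liminf u Filter.atTop = sSup S := Filter.liminf_eq
  have hliminfv : Filter.liminf v Filter.atTop = sSup T := Filter.liminf_eq
  rw [hliminfu, hliminfv]
  by_cases hbdd : BddAbove S
  swap
  · rw [Real.sSup_of_not_bddAbove hbdd,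
      Real.sSup_of_not_bddAbove (fun hb => hbdd (hb.mono hST)), mul_zero]
  · have hS0 : (0:ℝ) ∈ S := Filter.Eventually.of_forall hu0
    have hT0 : (0:ℝ) ∈ T := Filter.Eventually.of_forall hv0
    set L := sSup S with hL
    have hL0 : 0 ≤ L := le_csSup hbdd hS0
    -- KEY
    have key : ∀ C : ℝ, L < C → ∃ᶠ m in atTop, v m ≤ k * C := by
      intro C hC
      set c := (L + C) / 2 with hc
      have hcC : c < C := by rw [hc]; linarith
      have hLc : L < c := by rw [hc]; linarith
      have hc0 : 0 ≤ c := by rw [hc]; linarith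
      have hfreq : ∃ᶠ n in atTop, u n ≤ c := by
        by_contra h
        rw [Filter.not_frequently] at h
        have hcS : c ∈ S := by
          filter_upwards [h] with n hn
          exact le_of_not_gt fun hlt => hn hlt.le
        exact absurd (le_csSup hbdd hcS) (not_le.2 hLc)
      obtain ⟨M, hM⟩ := exists_nat_ge (c / (C - c))
      have hM' : c ≤ (C - c) * M := by
        rw [div_le_iff₀ (by linarith : (0:ℝ) < C - c)] at hM
        linarith [hM]
      rw [Filter.frequently_atTop]
      intro N
      obtain ⟨n, hn1, hn2⟩ := Filter.frequently_atTop.1 hfreq (k * (N + M + 1))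
      refine ⟨n / k, ?_, ?_⟩
      · refine (Nat.le_div_iff_mul_le (by omega : 0 < k)).2 ?_
        calc N * k ≤ (N + M + 1) * k := Nat.mul_le_mul_right k (by omega)
        _ = k * (N + M + 1) := Nat.mul_comm _ _
        _ ≤ n := hn1
      · set m := n / k with hm
        have hm1 : k * m ≤ n := Nat.mul_div_le n k
        have hm2 : n < k * m + k := by
          conv_lhs => rw [← Nat.div_add_mod n k]
          exact Nat.add_lt_add_left (Nat.mod_lt n (show 0 < k by omega)) _
        have hmge : N + M + 1 ≤ m := by
          rw [hm]
          exact (Nat.le_div_iff_mul_le (by omega : 0 < k)).2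
            (by rw [Nat.mul_comm]; exact hn1)
        have hnpos : 0 < n := by
          have h0 : 0 < k * (N + M + 1) := Nat.mul_pos (by omega) (by omega)
          omega
        have hgn : (g n : ℝ) ≤ c * n := by
          have h2 : (g n : ℝ) / (n:ℝ) ≤ c := hn2
          have hnpos' : (0:ℝ) < n := by exact_mod_cast hnpos
          rw [div_le_iff₀ hnpos'] at h2
          exact h2
        have hgkm : (g (k*m) : ℝ) ≤ c * n := le_trans (by exact_mod_cast hmono hm1) hgn
        have hmpos : (0:ℝ) < m := by
          have : 0 < m := by omega
          exact_mod_cast this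
        have hMm : (M:ℝ) ≤ m := by exact_mod_cast (by omega : M ≤ m)
        have hnkm : (n:ℝ) ≤ k * m + k := by exact_mod_cast Nat.le_of_lt hm2
        show (g (k*m) : ℝ) / (m:ℝ) ≤ k * C
        rw [div_le_iff₀ hmpos]
        have hstep1 : (g (k*m) : ℝ) ≤ c * (k * m + k) := by nlinarith
        have hstep2 : c ≤ (C - c) * m := le_trans hM' (by nlinarith)
        nlinarith
    -- upper bound on T
    have hTub : ∀ b ∈ T, b ≤ k * L := by
      intro b hb
      have hforall : ∀ C, L < C → b ≤ k * C := by
        intro C hC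
        obtain ⟨m, hm1, hm2⟩ := ((key C hC).and_eventually hb).exists
        exact le_trans hm2 hm1
      have hdiv : b / k ≤ L := by
        refine le_of_forall_gt_imp_ge_of_dense fun C hC => ?_
        rw [div_le_iff₀ hkpos]
        calc b ≤ k * C := hforall C hC
        _ = C * k := by ring
      calc b = (b / k) * k := by field_simp
      _ ≤ L * k := mul_le_mul_of_nonneg_right hdiv (le_of_lt hkpos)
      _ = k * L := by ring
    have hTbdd : BddAbove T := ⟨k * L, fun b hb => hTub b hb⟩
    apply le_antisymm
    · exact csSup_le ⟨0, hT0⟩ hTub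
    · have hmem : ∀ a ∈ S, k * a ≤ sSup T := by
        intro a ha
        apply le_csSup hTbdd
        obtain ⟨N, hN⟩ := Filter.eventually_atTop.1 ha
        show ∀ᶠ m in atTop, k * a ≤ v m
        rw [Filter.eventually_atTop]
        refine ⟨N + 1, fun m hm => ?_⟩
        have hm1 : 1 ≤ m := by omega
        have hkm : N ≤ k * m := le_trans (by omega) (Nat.le_mul_of_pos_left m hk)
        have h1 : a ≤ u (k*m) := hN _ hkm
        have hmpos : (0:ℝ) < m := by exact_mod_cast hm1
        have hveq : v m = k * u (k*m) := by
          show (g (k*m) : ℝ) / (m:ℝ) = (k:ℝ) * ((g (k*m) : ℝ) / ((k*m : ℕ):ℝ))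
          rw [Nat.cast_mul, ← mul_div_assoc, mul_div_mul_left _ _ (ne_of_gt hkpos)]
        rw [hveq]
        exact mul_le_mul_of_nonneg_left h1 (le_of_lt hkpos)
      have hub : L ≤ sSup T / k := by
        apply csSup_le ⟨0, hS0⟩
        intro a ha
        rw [le_div_iff₀ hkpos]
        calc a * k = k * a := by ring
        _ ≤ sSup T := hmem a ha
      calc (k:ℝ) * L ≤ k * (sSup T / k) := mul_le_mul_of_nonneg_left hub (le_of_lt hkpos)
      _ = sSup T := by field_simp

/-! ### The main theorem -/

theorem liminf_sDeg_iterate (p : ℕ) [Fact p.Prime] (F : Type*) [Field F] [Fintype F]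
    [CharP F p] (A : Polynomial F) (hA : IsAdditivePoly p A)
    (hexc : ¬ ∃ (a : F) (h : ℕ), A = Polynomial.C a * Polynomial.X ^ p ^ h) :
    ∀ k : ℕ, 1 ≤ k →
      Filter.liminf (fun n : ℕ => (sDeg (polyIter A k) n : ℝ) / n) Filter.atTop =
        (k : ℝ) * Filter.liminf (fun n : ℕ => (sDeg A n : ℝ) / n) Filter.atTop := by
  intro k hk
  have hp : 0 < p := (Fact.out : p.Prime).pos
  have hA0 : A ≠ 0 := by
    intro h
    exact hexc ⟨0, 0, by simp [h]⟩
  have hc0 : A.coeff 0 = 0 := by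
    by_contra h
    obtain ⟨e, he⟩ := hA 0 h
    exact (pow_pos hp e).ne' he.symm
  have hdeg : 1 ≤ A.natDegree := by
    have hlc : A.coeff A.natDegree ≠ 0 := by
      have := Polynomial.leadingCoeff_ne_zero.2 hA0
      rwa [Polynomial.leadingCoeff] at this
    obtain ⟨e, he⟩ := hA A.natDegree hlc
    rw [he]
    exact pow_pos hp e
  -- iterates are nonzero
  have hiterdeg : ∀ n : ℕ, 1 ≤ (polyIter A n).natDegree := by
    intro n
    induction n with
    | zero => rw [polyIter_zero, Polynomial.natDegree_X]
    | succ n ih =>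
      rw [polyIter_succ, Polynomial.natDegree_comp]
      calc 1 = 1 * 1 := (Nat.one_mul 1).symm
      _ ≤ A.natDegree * (polyIter A n).natDegree := Nat.mul_le_mul hdeg ih
  have hiter0 : ∀ n : ℕ, polyIter A n ≠ 0 := by
    intro n h
    have := hiterdeg n
    rw [h, Polynomial.natDegree_zero] at this
    omega
  -- nonemptiness and membership of the defining sets
  have hne : ∀ n : ℕ, {j : ℕ | 0 < j ∧ SplitsIn (polyIter A n) j}.Nonempty := by
    intro n
    obtain ⟨j, hj1, hj2⟩ := splitsIn_exists (hiter0 n)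
    exact ⟨j, hj1, hj2⟩
  have hmem : ∀ n : ℕ, sDeg A n ∈ {j : ℕ | 0 < j ∧ SplitsIn (polyIter A n) j} :=
    fun n => Nat.sInf_mem (hne n)
  -- roots propagate to later iterates, using that `A` has zero constant term
  have hroot : ∀ (n : ℕ) (y : AlgebraicClosure F),
      Polynomial.aeval y (polyIter A n) = 0 → Polynomial.aeval y (polyIter A (n+1)) = 0 := by
    intro n y hy
    rw [polyIter_succ, Polynomial.aeval_comp, hy, Polynomial.aeval_def,
      Polynomial.eval₂_at_zero, hc0, map_zero]
  -- monotonicity of `sDeg A`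
  have hmono : Monotone (sDeg A) := by
    apply monotone_nat_of_le_succ
    intro n
    apply Nat.sInf_le
    exact ⟨(hmem (n+1)).1, fun y hy => (hmem (n+1)).2 y (hroot n y hy)⟩
  -- rewrite the left-hand side using `polyIter_polyIter`
  have hrw : (fun n : ℕ => (sDeg (polyIter A k) n : ℝ) / n)
      = fun n : ℕ => (sDeg A (k*n) : ℝ) / n := by
    funext n
    have : sDeg (polyIter A k) n = sDeg A (k*n) := by
      unfold sDeg
      rw [polyIter_polyIter]
    rw [this]
  rw [hrw]
  exact liminf_aux (sDeg A) hmono k hk
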